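/- arXiv:math/0003007 — 4 statements merged into one kernel-verified Lean document; each statement's English description precedes it below -/
import Mathlib

section
/- Let j, j' : 𝔷 → 𝔰𝔬(𝔳) be linear maps. If j ≃ j' (i.e., there exist orthogonal maps α of 𝔳 and β of 𝔷 with α j(z) α⁻¹ = j'(β z) for all z ∈ 𝔷), then the map τ : 𝔤(j) → 𝔤(j') given by τ(sA + X + Z) = sA + α(X) + β(Z) is a Lie algebra isomorphism that is also a linear isometry for the inner products in which 𝔳, 𝔷, 𝔞 are mutually orthogonal, 𝔳 and 𝔷 carry their given inner products, and ‖A‖ = 1/c. -/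
open scoped RealInnerProductSpace

/-- If j ≃ j' via orthogonal α, β (α j(z) α⁻¹ = j'(βz)), then
τ(sA + X + Z) = sA + α(X) + β(Z) is a Lie algebra isomorphism 𝔤(j) → 𝔤(j')
which is also a linear isometry for the inner products making 𝔳, 𝔷, 𝔞 mutually
orthogonal with ‖A‖ = 1/c. -/
theorem stmt_3 {V Z : Type*}
    [NormedAddCommGroup V] [InnerProductSpace ℝ V] [FiniteDimensional ℝ V]
    [NormedAddCommGroup Z] [InnerProductSpace ℝ Z] [FiniteDimensional ℝ Z]
    (c : ℝ) (hc : 0 < c)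
    (j j' : Z →ₗ[ℝ] V →ₗ[ℝ] V)
    (hskew : ∀ (z : Z) (x y : V), ⟪j z x, y⟫ = -⟪x, j z y⟫)
    (hskew' : ∀ (z : Z) (x y : V), ⟪j' z x, y⟫ = -⟪x, j' z y⟫)
    (α : V ≃ₗᵢ[ℝ] V) (β : Z ≃ₗᵢ[ℝ] Z)
    (heq : ∀ (z : Z) (x : V), α (j z x) = j' (β z) (α x))
    (ω ω' : V →ₗ[ℝ] V →ₗ[ℝ] Z)
    (hω : ∀ (x y : V) (z : Z), ⟪ω x y, z⟫ = ⟪j z x, y⟫)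
    (hω' : ∀ (x y : V) (z : Z), ⟪ω' x y, z⟫ = ⟪j' z x, y⟫)
    (B B' : V × Z × ℝ → V × Z × ℝ → V × Z × ℝ)
    (hB : ∀ u v, B u v =
      (((1 : ℝ)/2) • (u.2.2 • v.1 - v.2.2 • u.1),
        ω u.1 v.1 + u.2.2 • v.2.1 - v.2.2 • u.2.1, (0 : ℝ)))
    (hB' : ∀ u v, B' u v =
      (((1 : ℝ)/2) • (u.2.2 • v.1 - v.2.2 • u.1),
        ω' u.1 v.1 + u.2.2 • v.2.1 - v.2.2 • u.2.1, (0 : ℝ)))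
    (ip : V × Z × ℝ → V × Z × ℝ → ℝ)
    (hip : ∀ u v, ip u v = ⟪u.1, v.1⟫ + ⟪u.2.1, v.2.1⟫ + u.2.2 * v.2.2 / c ^ 2)
    (τ : V × Z × ℝ → V × Z × ℝ)
    (hτ : ∀ u, τ u = (α u.1, β u.2.1, u.2.2)) :
    Function.Bijective τ ∧
    (∀ (r : ℝ) (u v : V × Z × ℝ), τ (r • u + v) = r • τ u + τ v) ∧
    (∀ u v, τ (B u v) = B' (τ u) (τ v)) ∧
    (∀ u v, ip (τ u) (τ v) = ip u v) := by

  have hωβ : ∀ x y : V, β (ω x y) = ω' (α x) (α y) := by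
    intro x y
    apply ext_inner_right ℝ
    intro z
    have h1 : ⟪β (ω x y), z⟫ = ⟪ω x y, β.symm z⟫ := by
      rw [← β.inner_map_map (ω x y) (β.symm z), β.apply_symm_apply]
    rw [h1, hω, hω', ← α.inner_map_map (j (β.symm z) x) y, heq, β.apply_symm_apply]
  refine ⟨⟨?_, ?_⟩, ?_, ?_, ?_⟩
  · intro u v huv
    rw [hτ u, hτ v] at huv
    obtain ⟨h1, h2⟩ := Prod.ext_iff.mp huv
    obtain ⟨h2, h3⟩ := Prod.ext_iff.mp h2
    exact Prod.ext (α.injective h1) (Prod.ext (β.injective h2) h3)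
  · intro u
    refine ⟨(α.symm u.1, β.symm u.2.1, u.2.2), ?_⟩
    rw [hτ]
    simp
  · intro r u v
    rw [hτ, hτ, hτ]
    simp [Prod.smul_def, smul_smul, map_add, map_smul]
  · intro u v
    rw [hτ, hB, hB', hτ u, hτ v]
    simp only [map_smul, map_sub, map_add, hτ]
    refine Prod.ext ?_ (Prod.ext ?_ rfl)
    · simp
    · simp [hωβ]
  · intro u v
    rw [hip, hip, hτ u, hτ v]
    simp [α.inner_map_map, β.inner_map_map]
end

section
/- Let 𝔷 = Im ℍ ≅ ℝ³ with inner product ⟨Z,W⟩ = (2/3)(Z,W), and 𝔳 = ℍ × ℝ² ≅ ℝ⁶. Define j'(Z)(U,V) = (ZU, 0) for U ∈ ℍ, V ∈ ℝ². Then for every nonzero Z, the kernel of j'(Z) is exactly {0} × ℝ², independent of Z, and for any orthonormal basis {Z₁,Z₂,Z₃} of 𝔷 the operator Σᵢ j'(Zᵢ)² equals −(9/2)·Id on ℍ × {0} and 0 on {0} × ℝ², hence is not a scalar operator. -/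
open scoped RealInnerProductSpace Quaternion

lemma imag_mul_self (Z : ℍ[ℝ]) (h : Z.re = 0) :
    Z * Z = -((Quaternion.normSq Z : ℝ) : ℍ[ℝ]) := by
  have hs : star Z = -Z := by
    ext <;> simp [h]
  have := Quaternion.self_mul_star Z
  rw [hs, mul_neg, neg_eq_iff_eq_neg] at this
  exact this

/-- With 𝔷 = Im ℍ carrying the inner product ⟨Z,W⟩ = (2/3)(Z,W)
and 𝔳 = ℍ × ℝ², j'(Z)(U,V) = (ZU, 0): for nonzero Z the kernel of j'(Z) is
exactly {0} × ℝ² (i.e. ZU = 0 ↔ U = 0), and for an orthonormal basis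
{Z₁,Z₂,Z₃} of 𝔷 the operator Σᵢ j'(Zᵢ)² equals −(9/2)·Id on ℍ × {0} and 0 on
{0} × ℝ², hence is not a scalar operator. -/
theorem stmt_10 (Z : Fin 3 → ℍ[ℝ]) (himag : ∀ i, (Z i).re = 0)
    (horth : ∀ i j : Fin 3, (2/3 : ℝ) * ⟪Z i, Z j⟫ = if i = j then 1 else 0)
    (Z0 : ℍ[ℝ]) (hZ0re : Z0.re = 0) (hZ0 : Z0 ≠ 0) :
    (∀ U : ℍ[ℝ], Z0 * U = 0 ↔ U = 0) ∧
    (∀ U : ℍ[ℝ], ∑ i, Z i * (Z i * U) = (-(9/2 : ℝ)) • U) ∧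
    ¬ ∃ r : ℝ, ∀ W : ℍ[ℝ] × (Fin 2 → ℝ),
        ((∑ i, Z i * (Z i * W.1), (0 : Fin 2 → ℝ)) : ℍ[ℝ] × (Fin 2 → ℝ))
          = r • W := by
  have hsq : ∀ i, Z i * Z i = -((3/2 : ℝ) : ℍ[ℝ]) := by
    intro i
    have h1 := horth i i
    rw [if_pos rfl, Quaternion.inner_self] at h1
    have h2 : (Quaternion.normSq (Z i) : ℝ) = 3/2 := by linarith
    rw [imag_mul_self (Z i) (himag i), h2]
  have key : ∀ U : ℍ[ℝ], ∑ i, Z i * (Z i * U) = (-(9/2 : ℝ)) • U := by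
    intro U
    have : ∀ i, Z i * (Z i * U) = (-(3/2 : ℝ)) • U := by
      intro i
      rw [← mul_assoc, hsq i, ← Quaternion.coe_neg, Quaternion.coe_mul_eq_smul]
    rw [Finset.sum_congr rfl (fun i _ => this i), Fin.sum_univ_three]
    module
  refine ⟨fun U => ⟨fun h => ?_, fun h => by simp [h]⟩, key, ?_⟩
  · rcases mul_eq_zero.mp h with h | h
    · exact absurd h hZ0
    · exact h
  · rintro ⟨r, hr⟩
    have h1 := hr (1, 0)
    have h2 := hr (0, fun _ => 1)
    simp only [key, Prod.smul_mk, Prod.mk.injEq] at h1 h2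
    have hr1 : r = -(9/2 : ℝ) := by
      simpa using congrArg QuaternionAlgebra.re h1.1.symm
    have hr2 : r = 0 := by
      have := h2.2
      have := congrFun this.symm 0
      simpa using this
    rw [hr1] at hr2
    norm_num at hr2
end

section
/- The maps j and j' of the preceding construction (j(Z)(U,V) = (Z×U, Z×V) on ℝ³×ℝ³ and j'(Z)(U,V) = (ZU, 0) on ℍ×ℝ²) are isospectral: for each Z ∈ ℝ³ ≅ Im ℍ, both j(Z) and j'(Z) have eigenvalues ±√(3/2)‖Z‖·i and 0, each with multiplicity 2 (equivalently, equal characteristic polynomials x²(x² + (3/2)‖Z‖²)²). -/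
/-!
Both maps are direct sums of blocks whose characteristic polynomials are classical: the cross
product `U ↦ Z × U` has characteristic polynomial `X (X² + |Z|²)`, left multiplication by a
quaternion `q` on `ℍ` has `(X² - 2 Re q X + |q|²)²` (the square of its reduced characteristic
polynomial), and the zero map on `ℝ²` has `X²`. For `q = Z` purely imaginary both sums give
`X² (X² + |Z|²)²`, and `|Z|² = (3/2)‖Z‖²`.
-/

open scoped Quaternion
open Polynomial

variable {R : Type*} [CommRing R]

theorem charpoly_crossProduct (v : Fin 3 → R) :
    (crossProduct v).charpoly = X * (X ^ 2 + C (v ⬝ᵥ v)) := by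
  have hmat : LinearMap.toMatrix (Pi.basisFun R (Fin 3)) (Pi.basisFun R (Fin 3)) (crossProduct v)
      = !![0, -v 2, v 1; v 2, 0, -v 0; -v 1, v 0, 0] := by
    ext i j
    fin_cases i <;> fin_cases j <;> simp [crossProduct, Pi.single]
  rw [← LinearMap.charpoly_toMatrix _ (Pi.basisFun R (Fin 3)), hmat, Matrix.charpoly,
    Matrix.det_fin_three]
  simp [dotProduct, Fin.sum_univ_three]
  ring

namespace QuaternionAlgebra

variable {c₁ c₂ c₃ : R}

theorem leftMulMatrix_basisOneIJK (q : ℍ[R,c₁,c₂,c₃]) :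
    Algebra.leftMulMatrix (basisOneIJK c₁ c₂ c₃) q =
      !![q.re, c₁ * q.imI, c₃ * q.imJ, c₂ * c₃ * q.imJ - c₁ * c₃ * q.imK;
         q.imI, q.re + c₂ * q.imI, c₃ * q.imK, -c₃ * q.imJ;
         q.imJ, c₂ * q.imJ - c₁ * q.imK, q.re, c₁ * q.imI;
         q.imK, -q.imJ, q.imI, q.re + c₂ * q.imI] := by
  ext i j
  rw [Algebra.leftMulMatrix_eq_repr_mul, coe_basisOneIJK_repr]
  fin_cases i <;> fin_cases j <;> simp [basisOneIJK, Module.Basis.coe_ofEquivFun]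

theorem charpoly_mulLeft (q : ℍ[R,c₁,c₂,c₃]) :
    (LinearMap.mulLeft R q).charpoly =
      (X ^ 2 - C (2 * q.re + c₂ * q.imI) * X + C (q * star q).re) ^ 2 := by
  rw [← LinearMap.charpoly_toMatrix _ (basisOneIJK c₁ c₂ c₃), Algebra.toMatrix_lmul_eq,
    leftMulMatrix_basisOneIJK, Matrix.charpoly, Matrix.det_succ_row_zero]
  simp [Matrix.det_succ_row_zero, Fin.sum_univ_succ, Matrix.submatrix, Fin.succAbove,
    Matrix.charmatrix_apply, C_ofNat]
  ring

end QuaternionAlgebra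

theorem Quaternion.charpoly_mulLeft (q : ℍ[R]) :
    (LinearMap.mulLeft R q).charpoly = (X ^ 2 - 2 * C q.re * X + C (normSq q)) ^ 2 := by
  refine (QuaternionAlgebra.charpoly_mulLeft (c₁ := -1) (c₂ := 0) (c₃ := -1) q).trans ?_
  simp only [zero_mul, add_zero, C_mul, C_ofNat]
  rfl

/-- The maps j(Z)(U,V) = (Z×U, Z×V) on ℝ³×ℝ³ and
j'(Z)(U,V) = (ZU, 0) on ℍ×ℝ² are isospectral: for each Z (with corresponding
purely imaginary quaternion Zq) both have characteristic polynomial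
x²(x² + (3/2)‖Z‖²)², i.e. eigenvalues ±√(3/2)‖Z‖·i and 0, each with
multiplicity 2, where ‖Z‖ is the norm of the inner product ⟨Z,W⟩ = (2/3)(Z,W). -/
theorem stmt_11 (Z : Fin 3 → ℝ)
    (Zq : ℍ[ℝ]) (hZq : Zq.re = 0 ∧ Zq.imI = Z 0 ∧ Zq.imJ = Z 1 ∧ Zq.imK = Z 2)
    (J : ((Fin 3 → ℝ) × (Fin 3 → ℝ)) →ₗ[ℝ] ((Fin 3 → ℝ) × (Fin 3 → ℝ)))
    (hJ : ∀ U, J U = (crossProduct Z U.1, crossProduct Z U.2))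
    (J' : (ℍ[ℝ] × (Fin 2 → ℝ)) →ₗ[ℝ] (ℍ[ℝ] × (Fin 2 → ℝ)))
    (hJ' : ∀ U, J' U = (Zq * U.1, 0)) :
    J.charpoly = J'.charpoly ∧
    J.charpoly = Polynomial.X ^ 2 *
      (Polynomial.X ^ 2 +
        Polynomial.C ((3/2) * Real.sqrt ((2/3) * ∑ i, Z i * Z i) ^ 2)) ^ 2 := by
  obtain ⟨hre, hi, hj, hk⟩ := hZq
  have hJ_prod : J = (crossProduct Z).prodMap (crossProduct Z) := by
    ext U <;> simp [hJ]
  have hJ'_prod : J' = (LinearMap.mulLeft ℝ Zq).prodMap 0 := by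
    ext U <;> simp [hJ']
  have hnormSq : Quaternion.normSq Zq = Z ⬝ᵥ Z := by
    simp [Quaternion.normSq_def', dotProduct, Fin.sum_univ_three, hre, hi, hj, hk, sq]
  have hnorm : (3/2) * Real.sqrt ((2/3) * ∑ i, Z i * Z i) ^ 2 = Z ⬝ᵥ Z := by
    have hsum : 0 ≤ ∑ i, Z i * Z i := Finset.sum_nonneg fun i _ => mul_self_nonneg (Z i)
    rw [Real.sq_sqrt (by positivity)]
    simp only [dotProduct]
    ring
  rw [hJ_prod, hJ'_prod, LinearMap.charpoly_prodMap, LinearMap.charpoly_prodMap,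
    charpoly_crossProduct, Quaternion.charpoly_mulLeft, LinearMap.charpoly_zero,
    Module.finrank_fin_fun, hnormSq, hnorm, hre, C_0]
  constructor <;> ring
end

section
/- In 𝔤(j,c) with Koszul-defined ∇, for any unit vector Z ∈ 𝔷 one has ∇_Z Z = c²A. Consequently, for a k-dimensional subspace 𝔴 ⊆ 𝔷 with orthonormal basis Z₁,…,Z_k, the 'mean curvature' sum Σᵢ ∇_{Zᵢ} Zᵢ equals c²k·A. -/
open scoped RealInnerProductSpace

/-! The bracket `[W, Z]` of any `W` with a central `Z` is `a(W) • Z`, where `a(W)` is the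
`A`-coordinate of `W`, so in the Koszul formula for `⟨∇_Z Z, W⟩` only the two terms
`⟨[W, Z], Z⟩ = a(W) ‖Z‖²` survive. Hence `⟨∇_Z Z, W⟩ = a(W) ‖Z‖² = ⟨c² ‖Z‖² A, W⟩` for every
`W`, and the metric is nondegenerate. -/

section Gjc

variable {V Z : Type*} [NormedAddCommGroup V] [InnerProductSpace ℝ V]
  [NormedAddCommGroup Z] [InnerProductSpace ℝ Z]

/-- The metric of `𝔤(j,c) = 𝔳 ⊕ 𝔷 ⊕ ℝA`; the last coordinate is the coefficient of `A`,
which has norm `1 / c`. -/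
noncomputable def gjcInner (c : ℝ) (u v : V × Z × ℝ) : ℝ :=
  ⟪u.1, v.1⟫ + ⟪u.2.1, v.2.1⟫ + u.2.2 * v.2.2 / c ^ 2

noncomputable def gjcBracket (ω : V →ₗ[ℝ] V →ₗ[ℝ] Z) (u v : V × Z × ℝ) : V × Z × ℝ :=
  (((1 : ℝ) / 2) • (u.2.2 • v.1 - v.2.2 • u.1), ω u.1 v.1 + u.2.2 • v.2.1 - v.2.2 • u.2.1, 0)

theorem gjcInner_A_left {c : ℝ} (hc : c ≠ 0) (s : ℝ) (w : V × Z × ℝ) :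
    gjcInner c ((0, 0, c ^ 2 * s) : V × Z × ℝ) w = s * w.2.2 := by
  simp only [gjcInner, inner_zero_left, zero_add]
  field_simp

theorem gjcInner_center_left (c : ℝ) (z : Z) (w : V × Z × ℝ) :
    gjcInner c ((0, z, 0) : V × Z × ℝ) w = ⟪z, w.2.1⟫ := by
  simp [gjcInner]

theorem ext_gjcInner {c : ℝ} (hc : c ≠ 0) {a b : V × Z × ℝ}
    (h : ∀ w, gjcInner c a w = gjcInner c b w) : a = b := by
  have hV : a.1 = b.1 := ext_inner_right ℝ fun x => by simpa [gjcInner] using h (x, 0, 0)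
  have hZ : a.2.1 = b.2.1 := ext_inner_right ℝ fun z => by simpa [gjcInner] using h (0, z, 0)
  have hA : a.2.2 = b.2.2 := by
    simpa [gjcInner, hc] using h (0, 0, 1)
  exact Prod.ext hV (Prod.ext hZ hA)

theorem gjcBracket_center_right (ω : V →ₗ[ℝ] V →ₗ[ℝ] Z) (w : V × Z × ℝ) (z : Z) :
    gjcBracket ω w ((0, z, 0) : V × Z × ℝ) = (0, w.2.2 • z, 0) := by
  simp [gjcBracket]

theorem koszul_center_self {c : ℝ} (hc : c ≠ 0) {ω : V →ₗ[ℝ] V →ₗ[ℝ] Z}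
    {nabla : V × Z × ℝ → V × Z × ℝ → V × Z × ℝ}
    (hK : ∀ u v w, 2 * gjcInner c (nabla u v) w
      = gjcInner c (gjcBracket ω u v) w + gjcInner c (gjcBracket ω w u) v
        + gjcInner c (gjcBracket ω w v) u)
    (z : Z) :
    nabla ((0, z, 0) : V × Z × ℝ) (0, z, 0) = (0, 0, c ^ 2 * ⟪z, z⟫) := by
  refine ext_gjcInner hc fun w => ?_
  have h := hK (0, z, 0) (0, z, 0) w
  simp only [gjcBracket_center_right, gjcInner_center_left, inner_smul_left,
    RCLike.conj_to_real] at h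
  rw [gjcInner_A_left hc]
  linarith

end Gjc

theorem stmt_15_general {V Z : Type*}
    [NormedAddCommGroup V] [InnerProductSpace ℝ V]
    [NormedAddCommGroup Z] [InnerProductSpace ℝ Z]
    (c : ℝ) (hc : 0 < c)
    (ω : V →ₗ[ℝ] V →ₗ[ℝ] Z)
    (B : V × Z × ℝ → V × Z × ℝ → V × Z × ℝ)
    (hB : ∀ u v, B u v =
      (((1 : ℝ)/2) • (u.2.2 • v.1 - v.2.2 • u.1),
        ω u.1 v.1 + u.2.2 • v.2.1 - v.2.2 • u.2.1, (0 : ℝ)))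
    (ip : V × Z × ℝ → V × Z × ℝ → ℝ)
    (hip : ∀ u v, ip u v = ⟪u.1, v.1⟫ + ⟪u.2.1, v.2.1⟫ + u.2.2 * v.2.2 / c ^ 2)
    (nabla : V × Z × ℝ → V × Z × ℝ → V × Z × ℝ)
    (hK : ∀ u v w, 2 * ip (nabla u v) w
      = ip (B u v) w + ip (B w u) v + ip (B w v) u) :
    (∀ z : Z, ⟪z, z⟫ = 1 →
      nabla ((0, z, 0) : V × Z × ℝ) ((0, z, 0) : V × Z × ℝ)
        = ((0, 0, c ^ 2) : V × Z × ℝ)) ∧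
    (∀ (k : ℕ) (Zs : Fin k → Z),
      (∀ i i' : Fin k, ⟪Zs i, Zs i'⟫ = if i = i' then 1 else 0) →
      ∑ i, nabla ((0, Zs i, 0) : V × Z × ℝ) ((0, Zs i, 0) : V × Z × ℝ)
        = ((0, 0, c ^ 2 * k) : V × Z × ℝ)) := by
  obtain rfl : B = gjcBracket ω := funext₂ hB
  obtain rfl : ip = gjcInner c := funext₂ hip
  have unit : ∀ z : Z, ⟪z, z⟫ = 1 →
      nabla ((0, z, 0) : V × Z × ℝ) (0, z, 0) = (0, 0, c ^ 2) := fun z hz => by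
    rw [koszul_center_self hc.ne' hK z, hz, mul_one]
  refine ⟨unit, fun k Zs horth => ?_⟩
  rw [Finset.sum_congr rfl fun i _ => unit (Zs i) (by simpa using horth i i)]
  simp [mul_comm]

/-- In 𝔤(j,c) with the Koszul-defined connection, ∇_Z Z = c²A for
any unit vector Z ∈ 𝔷; consequently, for an orthonormal basis Z₁,…,Z_k of a
k-dimensional subspace of 𝔷, Σᵢ ∇_{Zᵢ} Zᵢ = c²k·A. -/
theorem stmt_15 {V Z : Type*}
    [NormedAddCommGroup V] [InnerProductSpace ℝ V] [FiniteDimensional ℝ V]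
    [NormedAddCommGroup Z] [InnerProductSpace ℝ Z] [FiniteDimensional ℝ Z]
    (c : ℝ) (hc : 0 < c)
    (j : Z →ₗ[ℝ] V →ₗ[ℝ] V)
    (hskew : ∀ (z : Z) (x y : V), ⟪j z x, y⟫ = -⟪x, j z y⟫)
    (ω : V →ₗ[ℝ] V →ₗ[ℝ] Z)
    (hω : ∀ (x y : V) (z : Z), ⟪ω x y, z⟫ = ⟪j z x, y⟫)
    (B : V × Z × ℝ → V × Z × ℝ → V × Z × ℝ)
    (hB : ∀ u v, B u v =
      (((1 : ℝ)/2) • (u.2.2 • v.1 - v.2.2 • u.1),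
        ω u.1 v.1 + u.2.2 • v.2.1 - v.2.2 • u.2.1, (0 : ℝ)))
    (ip : V × Z × ℝ → V × Z × ℝ → ℝ)
    (hip : ∀ u v, ip u v = ⟪u.1, v.1⟫ + ⟪u.2.1, v.2.1⟫ + u.2.2 * v.2.2 / c ^ 2)
    (nabla : V × Z × ℝ → V × Z × ℝ → V × Z × ℝ)
    (hK : ∀ u v w, 2 * ip (nabla u v) w
      = ip (B u v) w + ip (B w u) v + ip (B w v) u) :
    (∀ z : Z, ⟪z, z⟫ = 1 →
      nabla ((0, z, 0) : V × Z × ℝ) ((0, z, 0) : V × Z × ℝ)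
        = ((0, 0, c ^ 2) : V × Z × ℝ)) ∧
    (∀ (k : ℕ) (Zs : Fin k → Z),
      (∀ i i' : Fin k, ⟪Zs i, Zs i'⟫ = if i = i' then 1 else 0) →
      ∑ i, nabla ((0, Zs i, 0) : V × Z × ℝ) ((0, Zs i, 0) : V × Z × ℝ)
        = ((0, 0, c ^ 2 * k) : V × Z × ℝ)) :=
  stmt_15_general c hc ω B hB ip hip nabla hK
end
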